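/- arXiv:2009.12551 — 2 statements merged into one kernel-verified Lean document; each statement's English description precedes it below -/
import Mathlib

section
/- Let L : V → V be a bounded Δ-preserving operator on a Δ-invariant subspace V of L²(ℛ), where Δ is a uniform lattice in a second countable LCA group ℛ, and assume the only finite-dimensional Δ-invariant subspace of L²(ℛ) is {0} and that eigenspaces of any Δ-preserving operator are Δ-invariant. If L is compact, then L = 0. -/
/-!
`L† L` is compact and self-adjoint, and it commutes with the translations because each `T k` is
unitary. By the spectral theorem, were it nonzero it would have an eigenvalue `μ ≠ 0`, whose
eigenspace is finite-dimensional and Δ-invariant, hence zero. So `L† L = 0`, i.e. `L = 0`.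
-/

namespace ContinuousLinearMap

variable {𝕜 E : Type*} [RCLike 𝕜] [NormedAddCommGroup E] [InnerProductSpace 𝕜 E] [CompleteSpace E]

lemma adjoint_apply_comm_of_apply_comm {L : E →L[𝕜] E} {U : E ≃ₗᵢ[𝕜] E}
    (h : ∀ x, L (U x) = U (L x)) (x : E) : adjoint L (U x) = U (adjoint L x) := by
  have h_symm : ∀ y, L (U.symm y) = U.symm (L y) := fun y => by
    rw [U.eq_symm_apply, ← h, U.apply_symm_apply]
  refine ext_inner_right 𝕜 fun y => ?_
  rw [adjoint_inner_left, U.inner_map_eq_flip, U.inner_map_eq_flip, adjoint_inner_left, h_symm]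

omit [CompleteSpace E] in
lemma eigenspace_eq_ker_sub_smul_one (A : E →L[𝕜] E) (μ : 𝕜) :
    Module.End.eigenspace (A : E →ₗ[𝕜] E) μ =
      LinearMap.ker ((A - μ • 1 : E →L[𝕜] E) : E →ₗ[𝕜] E) := by
  rw [Module.End.eigenspace_def]
  rfl

lemma eq_zero_of_forall_finiteDimensional_eigenspace_eq_bot {A : E →L[𝕜] E}
    (hcpt : IsCompactOperator A) (hsymm : (A : E →ₗ[𝕜] E).IsSymmetric)
    (h : ∀ μ, FiniteDimensional 𝕜 (Module.End.eigenspace (A : E →ₗ[𝕜] E) μ) →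
      Module.End.eigenspace (A : E →ₗ[𝕜] E) μ = ⊥) :
    A = 0 := by
  refine (eq_zero_of_forall_hasEigenvalue_eq_zero hcpt hsymm).mp fun μ hμ => ?_
  by_contra hμ0
  exact Module.End.hasEigenvalue_iff.mp hμ (h μ (finite_dimensional_eigenspace hcpt μ hμ0))

end ContinuousLinearMap

open ContinuousLinearMap

/-- a compact Δ-preserving bounded operator on a Δ-invariant space
(on which the translations act as unitaries `T k` and every finite-dimensional
Δ-invariant subspace is zero, eigenspaces of Δ-preserving operators being
Δ-invariant) is the zero operator. -/
theorem stmt4 {V : Type*}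
    [NormedAddCommGroup V] [InnerProductSpace ℂ V] [CompleteSpace V]
    {Δ : Type*} (T : Δ → (V ≃ₗᵢ[ℂ] V))
    (L : V →L[ℂ] V)
    (hpres : ∀ (k : Δ) (x : V), L (T k x) = T k (L x))
    -- the only finite-dimensional Δ-invariant subspace is {0}
    (hfin : ∀ W : Submodule ℂ V, (∀ (k : Δ) (x : V), x ∈ W → T k x ∈ W) →
      FiniteDimensional ℂ W → W = ⊥)
    -- eigenspaces of any Δ-preserving operator are Δ-invariant
    (heig : ∀ (M : V →L[ℂ] V), (∀ (k : Δ) (x : V), M (T k x) = T k (M x)) →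
      ∀ (lam : ℂ) (k : Δ) (x : V),
        x ∈ LinearMap.ker ((M - lam • (1 : V →L[ℂ] V) : V →L[ℂ] V) : V →ₗ[ℂ] V) →
        T k x ∈ LinearMap.ker ((M - lam • (1 : V →L[ℂ] V) : V →L[ℂ] V) : V →ₗ[ℂ] V))
    (hcpt : IsCompactOperator L) :
    L = 0 := by
  have hA_pres : ∀ k x, (adjoint L ∘L L) (T k x) = T k ((adjoint L ∘L L) x) := fun k x => by
    rw [comp_apply, comp_apply, hpres, adjoint_apply_comm_of_apply_comm (hpres k)]
  have hA : adjoint L ∘L L = 0 := by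
    refine eq_zero_of_forall_finiteDimensional_eigenspace_eq_bot (hcpt.clm_comp (adjoint L))
      (IsSelfAdjoint.star_mul_self L).isSymmetric fun μ hfd => ?_
    rw [eigenspace_eq_ker_sub_smul_one] at hfd ⊢
    exact hfin _ (heig _ hA_pres μ) hfd
  exact adjoint_comp_self_eq_zero_iff.mp hA
end

section
/- Let L : V → V be a bounded Δ-preserving operator on a Δ-invariant space V, and suppose {a_j}_{j∈I} ⊆ ℓ²(Δ) are sequences of bounded spectrum with V_{a_j} := ker(L − Λ_{a_j}) such that V = ⊕̇_{j∈I} V_{a_j} (orthogonal direct sum). Then L = Σ_{j∈I} Λ_{a_j} P_{V_{a_j}}, where P_{V_{a_j}} is the orthogonal projection of V onto V_{a_j}, the series converging in the strong operator topology when I is infinite. -/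
open scoped InnerProductSpace

/-!
The kernels `K j = ker (L - Λ j)` form a Hilbert-sum decomposition of `H`, so every `f` is the
unconditional sum of its orthogonal projections `P j f` onto them. Applying the continuous map `L`
termwise, and using that `L` agrees with `Λ j` on `K j`, gives `L f = ∑ j, Λ j (P j f)`.
-/

namespace IsHilbertSum

variable {𝕜 E ι : Type*} [RCLike 𝕜] [NormedAddCommGroup E] [InnerProductSpace 𝕜 E]
  [CompleteSpace E] {K : ι → Submodule 𝕜 E} [∀ i, CompleteSpace (K i)]

theorem hasSum_starProjection (hK : IsHilbertSum 𝕜 (fun i => K i) fun i => (K i).subtypeₗᵢ)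
    (x : E) : HasSum (fun i => (K i).starProjection x) x := by
  classical
  set g : ι → E := fun i => (hK.linearIsometryEquiv x i : E)
  have hg : HasSum g x := by
    simpa using hK.hasSum_linearIsometryEquiv_symm (hK.linearIsometryEquiv x)
  have hproj (i : ι) : (K i).starProjection x = g i := by
    -- project the decomposition of `x` onto `K i`: all other summands are orthogonal to `K i`
    have hterm : (fun j => (K i).starProjection (g j)) = fun j => if j = i then g i else 0 := by
      funext j
      by_cases hji : j = i
      · subst hji
        rw [if_pos rfl, Submodule.starProjection_eq_self_iff]
        exact (hK.linearIsometryEquiv x j).2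
      · rw [if_neg hji, Submodule.starProjection_apply_eq_zero_iff]
        exact hK.OrthogonalFamily.isOrtho hji (hK.linearIsometryEquiv x j).2
    have hsum_i := (K i).starProjection.hasSum hg
    rw [hterm] at hsum_i
    exact hsum_i.unique (hasSum_ite_eq i _)
  simpa only [hproj] using hg

end IsHilbertSum

theorem stmt18_general {H : Type*}
    [NormedAddCommGroup H] [InnerProductSpace ℂ H] [CompleteSpace H]
    {I : Type*}
    (L : H →L[ℂ] H)
    (Λ : I → (H →L[ℂ] H))
    (hortho : ∀ i j : I, i ≠ j → ∀ x ∈ LinearMap.ker ((L - Λ i : H →L[ℂ] H) : H →ₗ[ℂ] H),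
      ∀ y ∈ LinearMap.ker ((L - Λ j : H →L[ℂ] H) : H →ₗ[ℂ] H), ⟪x, y⟫_ℂ = 0)
    (hdense : (⨆ j : I, LinearMap.ker ((L - Λ j : H →L[ℂ] H) : H →ₗ[ℂ] H)).topologicalClosure = ⊤)
    (P : I → (H →L[ℂ] H))
    (hP : ∀ (j : I) (x : H), P j x ∈ LinearMap.ker ((L - Λ j : H →L[ℂ] H) : H →ₗ[ℂ] H) ∧
      ∀ y ∈ LinearMap.ker ((L - Λ j : H →L[ℂ] H) : H →ₗ[ℂ] H), ⟪x - P j x, y⟫_ℂ = 0) :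
    ∀ f : H, HasSum (fun j : I => Λ j (P j f)) (L f) := by
  intro f
  set K : I → Submodule ℂ H := fun j => LinearMap.ker ((L - Λ j : H →L[ℂ] H) : H →ₗ[ℂ] H)
  have (j : I) : CompleteSpace (K j) := (L - Λ j).isClosed_ker.completeSpace_coe
  have hK : IsHilbertSum ℂ (fun j => K j) fun j => (K j).subtypeₗᵢ :=
    .mkInternal _ (fun i j hij v w => hortho i j hij v v.2 w w.2) hdense.ge
  have hterm (j : I) : Λ j (P j f) = L ((K j).starProjection f) := by
    rw [(K j).eq_starProjection_of_mem_of_inner_eq_zero (hP j f).1 (hP j f).2]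
    exact (sub_eq_zero.mp (hP j f).1).symm
  simpa only [hterm] using L.hasSum (hK.hasSum_starProjection f)

/-- if a bounded Δ-preserving operator `L` on a Δ-invariant space `V`
admits an orthogonal decomposition `V = ⊕̇_j V_{a_j}` into Δ-eigenspaces
`V_{a_j} = ker(L − Λ_{a_j})`, then `L = Σ_j Λ_{a_j} P_{V_{a_j}}` in the strong
operator topology. Here `H` plays the role of `V`, `T` the translations, `Λ j`
the Δ-eigenvalue operators `Λ_{a_j}`, and `P j` the orthogonal projection onto
`ker (L - Λ j)`. -/
theorem stmt18 {H : Type*}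
    [NormedAddCommGroup H] [InnerProductSpace ℂ H] [CompleteSpace H]
    {Δ : Type*} (T : Δ → (H ≃ₗᵢ[ℂ] H))
    {I : Type*} [Countable I]
    (L : H →L[ℂ] H) (hL : ∀ (k : Δ) (x : H), L (T k x) = T k (L x))
    (Λ : I → (H →L[ℂ] H))
    (hΛ : ∀ (j : I) (k : Δ) (x : H), Λ j (T k x) = T k (Λ j x))
    (hne : ∀ j : I, LinearMap.ker ((L - Λ j : H →L[ℂ] H) : H →ₗ[ℂ] H) ≠ ⊥)
    (hortho : ∀ i j : I, i ≠ j → ∀ x ∈ LinearMap.ker ((L - Λ i : H →L[ℂ] H) : H →ₗ[ℂ] H),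
      ∀ y ∈ LinearMap.ker ((L - Λ j : H →L[ℂ] H) : H →ₗ[ℂ] H), ⟪x, y⟫_ℂ = 0)
    (hdense : (⨆ j : I, LinearMap.ker ((L - Λ j : H →L[ℂ] H) : H →ₗ[ℂ] H)).topologicalClosure = ⊤)
    (P : I → (H →L[ℂ] H))
    (hP : ∀ (j : I) (x : H), P j x ∈ LinearMap.ker ((L - Λ j : H →L[ℂ] H) : H →ₗ[ℂ] H) ∧
      ∀ y ∈ LinearMap.ker ((L - Λ j : H →L[ℂ] H) : H →ₗ[ℂ] H), ⟪x - P j x, y⟫_ℂ = 0) :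
    ∀ f : H, HasSum (fun j : I => Λ j (P j f)) (L f) :=
  stmt18_general L Λ hortho hdense P hP
end
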